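/- arXiv:2403.07821 — 5 statements merged into one kernel-verified Lean document; each statement's English description precedes it below -/
import Mathlib

section
/- Theorem (strengthened fixed-point check): Let S be a type, I : S → Prop, T : S → S → Prop a state-transition system, and P : S → Prop a safety property with I s implying P s for all s. Let n ≥ 1 and let itp₁, …, itpₙ : S → Prop form an interpolant chain such that itpⱼ s implies P s for all s and all 1 ≤ j ≤ n. Let inv : S → Prop be an inductive predicate. If the strengthened fixed-point check holds, i.e., for every s, inv s and itpₙ s together imply I s or itpⱼ s for some 1 ≤ j ≤ n−1, then the system fulfills P, i.e., every reachable state satisfies P. -/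
/-- A state `s` is reachable in the state-transition system `(I, T)` if it can be
obtained from some initial state by finitely many `T`-steps. -/
def Reachable {S : Type*} (I : S → Prop) (T : S → S → Prop) (s : S) : Prop :=
  ∃ s₀, I s₀ ∧ Relation.ReflTransGen T s₀ s

/-- Strengthened fixed-point check: if the interpolants `itp 1, …, itp n` form an
interpolant chain, each of them implies the safety property `P`, `I` implies `P`,
`inv` is inductive, and the strengthened fixed-point check
`inv ∧ itp n → I ∨ itp 1 ∨ … ∨ itp (n-1)` holds, then the system fulfills `P`. -/
theorem strengthened_fixed_point_check {S : Type*} (I : S → Prop) (T : S → S → Prop)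
    (P inv : S → Prop) (n : ℕ) (itp : ℕ → S → Prop)
    (hn : 1 ≤ n)
    (hIP : ∀ s, I s → P s)
    (hChainInit : ∀ s s', I s → T s s' → itp 1 s')
    (hChainStep : ∀ j, 1 ≤ j → j < n → ∀ s s', itp j s → T s s' → itp (j + 1) s')
    (hItpSafe : ∀ j, 1 ≤ j → j ≤ n → ∀ s, itp j s → P s)
    (hInvInit : ∀ s, I s → inv s)
    (hInvStep : ∀ s s', inv s → T s s' → inv s')
    (hFPC : ∀ s, inv s → itp n s → I s ∨ ∃ j, 1 ≤ j ∧ j < n ∧ itp j s) :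
    ∀ s, Reachable I T s → P s := by
  rintro s ⟨s₀, hI0, hRT⟩
  suffices h : inv s ∧ (I s ∨ ∃ j, 1 ≤ j ∧ j ≤ n ∧ itp j s) by
    rcases h.2 with hI | ⟨j, h1, h2, hj⟩
    · exact hIP s hI
    · exact hItpSafe j h1 h2 s hj
  induction hRT with
  | refl => exact ⟨hInvInit s₀ hI0, Or.inl hI0⟩
  | tail hab hbc ih =>
    rename_i b c
    refine ⟨hInvStep b c ih.1 hbc, ?_⟩
    rcases ih.2 with hIb | ⟨j, h1, h2, hj⟩
    · exact Or.inr ⟨1, le_refl 1, hn, hChainInit b c hIb hbc⟩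
    · rcases lt_or_eq_of_le h2 with hlt | heq
      · exact Or.inr ⟨j + 1, by omega, by omega, hChainStep j h1 hlt b c hj hbc⟩
      · subst heq
        rcases hFPC b ih.1 hj with hIb | ⟨j', h1', h2', hj'⟩
        · exact Or.inr ⟨1, le_refl 1, hn, hChainInit b c hIb hbc⟩
        · exact Or.inr ⟨j' + 1, by omega, by omega, hChainStep j' h1' h2' b c hj' hbc⟩
end

section
/- Let S be a type, I : S → Prop, T : S → S → Prop a state-transition system, n ≥ 1, itp₁, …, itpₙ : S → Prop an interpolant chain, and inv : S → Prop an inductive predicate. If for every s, inv s and itpₙ s together imply I s or itpⱼ s for some 1 ≤ j ≤ n−1, then the predicate G defined by G s := I s ∨ (itp₁ s ∨ ⋯ ∨ itpₙ₋₁ s) is relatively inductive to inv, i.e., I s implies G s for all s, and inv s, G s and T s s' together imply G s' for all s, s'. -/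
/-- If the interpolants `itp 1, …, itp n` form an interpolant chain, `inv` is
inductive, and the strengthened fixed-point check holds, then
`G s := I s ∨ itp 1 s ∨ … ∨ itp (n-1) s` is relatively inductive to `inv`. -/
theorem strengthened_check_gives_relatively_inductive {S : Type*}
    (I : S → Prop) (T : S → S → Prop) (inv : S → Prop)
    (n : ℕ) (itp : ℕ → S → Prop)
    (hn : 1 ≤ n)
    (hChainInit : ∀ s s', I s → T s s' → itp 1 s')
    (hChainStep : ∀ j, 1 ≤ j → j < n → ∀ s s', itp j s → T s s' → itp (j + 1) s')
    (hInvInit : ∀ s, I s → inv s)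
    (hInvStep : ∀ s s', inv s → T s s' → inv s')
    (hFPC : ∀ s, inv s → itp n s → I s ∨ ∃ j, 1 ≤ j ∧ j < n ∧ itp j s) :
    (∀ s, I s → (I s ∨ ∃ j, 1 ≤ j ∧ j < n ∧ itp j s)) ∧
    (∀ s s', inv s → (I s ∨ ∃ j, 1 ≤ j ∧ j < n ∧ itp j s) → T s s' →
      (I s' ∨ ∃ j, 1 ≤ j ∧ j < n ∧ itp j s')) := by
  refine ⟨fun s hI => Or.inl hI, fun s s' hinv hG hT => ?_⟩
  have hinv' : inv s' := hInvStep s s' hinv hT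
  rcases hG with hI | ⟨j, hj1, hjn, hji⟩
  · have h1 : itp 1 s' := hChainInit s s' hI hT
    rcases lt_or_eq_of_le hn with h | h
    · exact Or.inr ⟨1, le_refl 1, h, h1⟩
    · exact hFPC s' hinv' (h ▸ h1)
  · have hstep : itp (j + 1) s' := hChainStep j hj1 hjn s s' hji hT
    rcases lt_or_eq_of_le (Nat.succ_le_of_lt hjn) with h | h
    · exact Or.inr ⟨j + 1, Nat.le_add_left 1 j, h, hstep⟩
    · exact hFPC s' hinv' (h ▸ hstep)
end

section
/- Plain IMC fixed-point: Let S be a type, I : S → Prop, T : S → S → Prop a state-transition system, n ≥ 1, and itp₁, …, itpₙ : S → Prop an interpolant chain. If the fixed-point check holds, i.e., for every s, itpₙ s implies I s or itpⱼ s for some 1 ≤ j ≤ n−1, then the predicate F defined by F s := I s ∨ (itp₁ s ∨ ⋯ ∨ itpₙ₋₁ s) is inductive, i.e., I s implies F s for all s, and F s together with T s s' implies F s' for all s, s'. -/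
/-- Plain IMC fixed-point: if the interpolants `itp 1, …, itp n` form an
interpolant chain and the fixed-point check
`itp n → I ∨ itp 1 ∨ … ∨ itp (n-1)` holds, then
`F s := I s ∨ itp 1 s ∨ … ∨ itp (n-1) s` is inductive. -/
theorem plain_imc_fixed_point {S : Type*}
    (I : S → Prop) (T : S → S → Prop)
    (n : ℕ) (itp : ℕ → S → Prop)
    (hn : 1 ≤ n)
    (hChainInit : ∀ s s', I s → T s s' → itp 1 s')
    (hChainStep : ∀ j, 1 ≤ j → j < n → ∀ s s', itp j s → T s s' → itp (j + 1) s')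
    (hFPC : ∀ s, itp n s → I s ∨ ∃ j, 1 ≤ j ∧ j < n ∧ itp j s) :
    (∀ s, I s → (I s ∨ ∃ j, 1 ≤ j ∧ j < n ∧ itp j s)) ∧
    (∀ s s', (I s ∨ ∃ j, 1 ≤ j ∧ j < n ∧ itp j s) → T s s' →
      (I s' ∨ ∃ j, 1 ≤ j ∧ j < n ∧ itp j s')) := by
  refine ⟨fun s h => Or.inl h, fun s s' hF hT => ?_⟩
  rcases hF with hI | ⟨j, hj1, hjn, hitp⟩
  · have h1 := hChainInit s s' hI hT
    rcases eq_or_lt_of_le hn with h | h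
    · exact hFPC s' (h ▸ h1)
    · exact Or.inr ⟨1, le_refl 1, h, h1⟩
  · have h1 := hChainStep j hj1 hjn s s' hitp hT
    rcases eq_or_lt_of_le (Nat.succ_le_of_lt hjn) with h | h
    · exact hFPC s' (h ▸ h1)
    · exact Or.inr ⟨j + 1, Nat.le_add_left 1 j, h, h1⟩
end

section
/- Plain IMC correctness: Let S be a type, I : S → Prop, T : S → S → Prop a state-transition system, and P : S → Prop a safety property with I s implying P s for all s. Let n ≥ 1 and let itp₁, …, itpₙ : S → Prop form an interpolant chain such that itpⱼ s implies P s for all s and all 1 ≤ j ≤ n. If for every s, itpₙ s implies I s or itpⱼ s for some 1 ≤ j ≤ n−1, then the system fulfills P, i.e., every reachable state satisfies P. -/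
/-- Plain IMC correctness: if the interpolants `itp 1, …, itp n` form an
interpolant chain, each of them implies the safety property `P`, `I` implies `P`,
and the fixed-point check `itp n → I ∨ itp 1 ∨ … ∨ itp (n-1)` holds, then every
reachable state satisfies `P`. -/
theorem plain_imc_correctness {S : Type*} (I : S → Prop) (T : S → S → Prop)
    (P : S → Prop) (n : ℕ) (itp : ℕ → S → Prop)
    (hn : 1 ≤ n)
    (hIP : ∀ s, I s → P s)
    (hChainInit : ∀ s s', I s → T s s' → itp 1 s')
    (hChainStep : ∀ j, 1 ≤ j → j < n → ∀ s s', itp j s → T s s' → itp (j + 1) s')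
    (hItpSafe : ∀ j, 1 ≤ j → j ≤ n → ∀ s, itp j s → P s)
    (hFPC : ∀ s, itp n s → I s ∨ ∃ j, 1 ≤ j ∧ j < n ∧ itp j s) :
    ∀ s, Reachable I T s → P s := by
  -- strengthened invariant
  set Q : S → Prop := fun s => I s ∨ ∃ j, 1 ≤ j ∧ j ≤ n ∧ itp j s with hQ
  have hstep : ∀ s s', Q s → T s s' → Q s' := by
    intro s s' hq ht
    have key : ∀ t, (I t ∨ ∃ j, 1 ≤ j ∧ j < n ∧ itp j t) → Q s' → Q s' := fun _ _ h => h
    rcases hq with hI | ⟨j, hj1, hjn, hitp⟩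
    · exact Or.inr ⟨1, le_refl 1, hn, hChainInit s s' hI ht⟩
    · rcases lt_or_eq_of_le hjn with hlt | heq
      · exact Or.inr ⟨j + 1, by omega, by omega, hChainStep j hj1 hlt s s' hitp ht⟩
      · subst heq
        rcases hFPC s hitp with hI | ⟨j', hj'1, hj'n, hitp'⟩
        · exact Or.inr ⟨1, le_refl 1, hn, hChainInit s s' hI ht⟩
        · exact Or.inr ⟨j' + 1, by omega, by omega, hChainStep j' hj'1 hj'n s s' hitp' ht⟩
  intro s ⟨s₀, hI0, hrt⟩
  have hQs : Q s := by
    induction hrt with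
    | refl => exact Or.inl hI0
    | tail _ ht ih => exact hstep _ _ ih ht
  rcases hQs with hI | ⟨j, hj1, hjn, hitp⟩
  · exact hIP s hI
  · exact hItpSafe j hj1 hjn s hitp
end

section
/- Craig interpolation for Boolean-valued predicates over assignments: Let V be a type of variables and let A, B : (V → Bool) → Prop be predicates on assignments. Suppose A depends only on a set S_A ⊆ V of variables (i.e., if two assignments agree on S_A then A holds of one iff of the other) and B depends only on a set S_B ⊆ V. If A v ∧ B v holds for no assignment v (A ∧ B is unsatisfiable), then there exists a predicate itp : (V → Bool) → Prop such that (1) A v implies itp v for every assignment v, (2) itp v ∧ B v holds for no assignment v, and (3) itp depends only on the common variables S_A ∩ S_B. -/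
/-- A predicate `C` on assignments depends only on the variables in `W` if its
truth value is unchanged by modifying variables outside `W`. -/
def DependsOnlyOn {V : Type*} (C : (V → Bool) → Prop) (W : Set V) : Prop :=
  ∀ v w : V → Bool, (∀ x ∈ W, v x = w x) → (C v ↔ C w)

/-- Craig interpolation for Boolean-valued predicates over assignments:
if `A` depends only on `SA`, `B` depends only on `SB`, and `A ∧ B` is
unsatisfiable, then there is an interpolant `itp` implied by `A`, inconsistent
with `B`, and depending only on the common variables `SA ∩ SB`. -/
theorem craig_interpolation_bool {V : Type*}
    (A B : (V → Bool) → Prop) (SA SB : Set V)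
    (hA : DependsOnlyOn A SA) (hB : DependsOnlyOn B SB)
    (hUnsat : ∀ v : V → Bool, ¬ (A v ∧ B v)) :
    ∃ itp : (V → Bool) → Prop,
      (∀ v, A v → itp v) ∧
      (∀ v, ¬ (itp v ∧ B v)) ∧
      DependsOnlyOn itp (SA ∩ SB) := by
  classical
  refine ⟨fun v => ∃ u, A u ∧ ∀ x ∈ SA ∩ SB, u x = v x, ?_, ?_, ?_⟩
  · exact fun v hv => ⟨v, hv, fun _ _ => rfl⟩
  · rintro v ⟨⟨u, hu, hagree⟩, hBv⟩
    set w : V → Bool := fun x => if x ∈ SA then u x else v x with hw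
    have hAw : A w := (hA u w (fun x hx => by simp [hw, hx])).mp hu
    have hBw : B w := (hB v w (fun x hx => by
      by_cases h : x ∈ SA
      · simpa [hw, h] using (hagree x ⟨h, hx⟩).symm
      · simp [hw, h])).mp hBv
    exact hUnsat w ⟨hAw, hBw⟩
  · intro v w h
    constructor
    · rintro ⟨u, hu, ha⟩
      exact ⟨u, hu, fun x hx => (ha x hx).trans (h x hx)⟩
    · rintro ⟨u, hu, ha⟩
      exact ⟨u, hu, fun x hx => (ha x hx).trans (h x hx).symm⟩
end
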